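/- arXiv:2211.05005 — 4 statements merged into one kernel-verified Lean document; each statement's English description precedes it below -/
import Mathlib

section
/- Let T ~ PB(p_1,…,p_n) be a Poisson binomial random variable, write q_i = 1−p_i so that stddev[T] = sqrt(Σ_{i=1}^n p_i q_i), and let X be an exponential random variable independent of T whose mean E[X] is at least max(1, stddev[T]). Fix θ ∈ ℝ and let B be the event that T + X > θn, and assume Pr[B] < 1/4. Then there is a universal constant C > 0 (independent of n, the p_i, θ and the law of X) such that the chi-squared distance between the conditional distribution of T given the complement of B and the distribution of T satisfies d_{χ²}((T | not B), T) ≤ C · (Pr[B] · stddev[T] / E[X])². -/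
open scoped BigOperators

/-- Probability mass function of the Poisson binomial distribution `PB(p₁,…,pₙ)`:
`Pr[T = t] = ∑_{S ⊆ [n], |S| = t} ∏_{i ∈ S} pᵢ ∏_{i ∉ S} (1 - pᵢ)`. -/
noncomputable def pbPMF (n : ℕ) (p : Fin n → ℝ) (t : ℕ) : ℝ :=
  ∑ s ∈ Finset.powersetCard t (Finset.univ : Finset (Fin n)),
    (∏ i ∈ s, p i) * ∏ i ∈ sᶜ, (1 - p i)

/-- Standard deviation of `PB(p₁,…,pₙ)`: `sqrt (∑ pᵢ (1 - pᵢ))`. -/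
noncomputable def pbStddev (n : ℕ) (p : Fin n → ℝ) : ℝ :=
  Real.sqrt (∑ i, p i * (1 - p i))

/-- Survival function of an exponential random variable `X ≥ 0` with rate `lam`
(mean `1/lam`): `Pr(X > s) = min 1 (exp (-lam * s))`. -/
noncomputable def expSurv (lam s : ℝ) : ℝ :=
  min 1 (Real.exp (-(lam * s)))

/-- `Pr(T + X > θ·n)` for `T ~ PB(p)` and `X` exponential with rate `lam`,
independent of `T`. -/
noncomputable def prExceed (n : ℕ) (p : Fin n → ℝ) (lam θ : ℝ) : ℝ :=
  ∑ t ∈ Finset.range (n + 1), pbPMF n p t * expSurv lam (θ * n - t)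

/-!
Write `s(t) = Pr(X > θn - t)`, so that `B` has conditional probability `s(T)` given `T`; then the
χ²-distance equals `Var s(T) / (1 - Pr[B])²`. Since `s` is nondecreasing with
`s(t + 1) ≤ e^λ s(t)` (`λ = lam` is the rate of `X`), revealing the Bernoulli summands one at a
time gives `E[s(T)²] ≤ E[s(T)]² ∏ᵢ (1 + (e^λ - 1)² pᵢ qᵢ)`: at each step the two conditional
means lie within a factor `e^λ` of each other, so the variance added is at most a
`(e^λ - 1)² pᵢ qᵢ` fraction of the squared mean. As `(e^λ - 1)² ≤ 4λ²` and `λ² ∑ pᵢ qᵢ ≤ 1`, the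
product is `1 + O(λ² stddev[T]²)`, whence `Var s(T) = O((Pr[B] · λ · stddev[T])²)`.
-/

open Finset

lemma two_point_sq_le {q A₀ A₁ B₀ B₁ c K : ℝ} (hq₀ : 0 ≤ q) (hq₁ : q ≤ 1) (hc : 1 ≤ c)
    (hA₀₁ : A₀ ≤ A₁) (hA₁ : A₁ ≤ c * A₀) (hK : 0 ≤ K) (hB₀ : B₀ ≤ A₀ ^ 2 * K)
    (hB₁ : B₁ ≤ A₁ ^ 2 * K) :
    (1 - q) * B₀ + q * B₁
      ≤ ((1 - q) * A₀ + q * A₁) ^ 2 * ((1 + (c - 1) ^ 2 * (q * (1 - q))) * K) := by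
  set M := (1 - q) * A₀ + q * A₁
  have hA₀M : A₀ ≤ M := by nlinarith
  have hgap : (A₁ - A₀) ^ 2 ≤ (c - 1) ^ 2 * M ^ 2 := by
    rw [← mul_pow]
    exact pow_le_pow_left₀ (by linarith) (by nlinarith) 2
  have hvar : (1 - q) * A₀ ^ 2 + q * A₁ ^ 2 = M ^ 2 + q * (1 - q) * (A₁ - A₀) ^ 2 := by ring
  have hq : 0 ≤ q * (1 - q) := mul_nonneg hq₀ (by linarith)
  calc (1 - q) * B₀ + q * B₁ ≤ (1 - q) * (A₀ ^ 2 * K) + q * (A₁ ^ 2 * K) := by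
        gcongr
    _ = (M ^ 2 + q * (1 - q) * (A₁ - A₀) ^ 2) * K := by rw [← hvar]; ring
    _ ≤ (M ^ 2 + q * (1 - q) * ((c - 1) ^ 2 * M ^ 2)) * K := by gcongr
    _ = M ^ 2 * ((1 + (c - 1) ^ 2 * (q * (1 - q))) * K) := by ring

section PoissonBinomial

variable {ι : Type*} [DecidableEq ι]

/-- `E[f(T)]` for `T ~ PB((p i)_{i ∈ s})`. -/
noncomputable def pbExpect (s : Finset ι) (p : ι → ℝ) (f : ℕ → ℝ) : ℝ :=
  ∑ S ∈ s.powerset, ((∏ i ∈ S, p i) * ∏ i ∈ s \ S, (1 - p i)) * f S.card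

lemma pbExpect_const (s : Finset ι) (p : ι → ℝ) (c : ℝ) : pbExpect s p (fun _ => c) = c := by
  rw [pbExpect, ← sum_mul, ← prod_add]
  simp

lemma pbExpect_const_mul (s : Finset ι) (p : ι → ℝ) (c : ℝ) (f : ℕ → ℝ) :
    pbExpect s p (fun t => c * f t) = c * pbExpect s p f := by
  simp only [pbExpect, mul_sum, mul_left_comm]

lemma pbExpect_mono {s : Finset ι} {p : ι → ℝ} (hp : ∀ i, 0 ≤ p i ∧ p i ≤ 1) {f g : ℕ → ℝ}
    (hfg : ∀ t, f t ≤ g t) : pbExpect s p f ≤ pbExpect s p g :=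
  sum_le_sum fun _ _ => mul_le_mul_of_nonneg_left (hfg _) <|
    mul_nonneg (prod_nonneg fun i _ => (hp i).1) (prod_nonneg fun i _ => sub_nonneg.2 (hp i).2)

lemma pbExpect_insert {s : Finset ι} {j : ι} (hj : j ∉ s) (p : ι → ℝ) (f : ℕ → ℝ) :
    pbExpect (insert j s) p f
      = (1 - p j) * pbExpect s p f + p j * pbExpect s p (fun t => f (t + 1)) := by
  rw [pbExpect, sum_powerset_insert hj, pbExpect, pbExpect, mul_sum, mul_sum]
  congr 1 <;> refine sum_congr rfl fun S hS => ?_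
  · have hjS : j ∉ S := fun h => hj (mem_powerset.1 hS h)
    rw [insert_sdiff_of_notMem _ hjS, prod_insert (fun h => hj (mem_sdiff.1 h).1)]
    ring
  · have hjS : j ∉ S := fun h => hj (mem_powerset.1 hS h)
    rw [insert_sdiff_insert, sdiff_insert_of_notMem hj, prod_insert hjS, card_insert_of_notMem hjS]
    ring

theorem pbExpect_sq_le {p : ι → ℝ} (hp : ∀ i, 0 ≤ p i ∧ p i ≤ 1)
    {c : ℝ} (hc : 1 ≤ c) (s : Finset ι) {f : ℕ → ℝ} (hf₀ : ∀ t, 0 ≤ f t)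
    (hf_mono : ∀ t, f t ≤ f (t + 1)) (hf_growth : ∀ t, f (t + 1) ≤ c * f t) :
    pbExpect s p (fun t => f t ^ 2)
      ≤ pbExpect s p f ^ 2 * ∏ i ∈ s, (1 + (c - 1) ^ 2 * (p i * (1 - p i))) := by
  induction s using Finset.induction_on generalizing f with
  | empty => simp [pbExpect]
  | insert j s hj ih =>
    rw [pbExpect_insert hj, pbExpect_insert hj, prod_insert hj]
    refine two_point_sq_le (hp j).1 (hp j).2 hc (pbExpect_mono hp hf_mono) ?_
      (prod_nonneg fun i _ => ?_) (ih hf₀ hf_mono hf_growth)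
      (ih (fun _ => hf₀ _) (fun _ => hf_mono _) (fun _ => hf_growth _))
    · rw [← pbExpect_const_mul]
      exact pbExpect_mono hp hf_growth
    · exact add_nonneg zero_le_one <|
        mul_nonneg (sq_nonneg _) (mul_nonneg (hp i).1 (sub_nonneg.2 (hp i).2))

end PoissonBinomial

lemma pbExpect_univ_eq_sum_pbPMF (n : ℕ) (p : Fin n → ℝ) (f : ℕ → ℝ) :
    pbExpect univ p f = ∑ t ∈ range (n + 1), pbPMF n p t * f t := by
  have hcard : ∀ S ∈ (univ : Finset (Fin n)).powerset, S.card ∈ range (n + 1) := fun S _ =>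
    mem_range_succ_iff.2 ((card_le_univ S).trans_eq (Fintype.card_fin n))
  rw [pbExpect, ← sum_fiberwise_of_maps_to hcard]
  refine sum_congr rfl fun t _ => ?_
  rw [pbPMF, sum_mul, powersetCard_eq_filter]
  refine sum_congr rfl fun S hS => ?_
  rw [(mem_filter.1 hS).2, compl_eq_univ_sdiff]

lemma pbStddev_sq (n : ℕ) (p : Fin n → ℝ) (hp : ∀ i, 0 ≤ p i ∧ p i ≤ 1) :
    pbStddev n p ^ 2 = ∑ i, p i * (1 - p i) :=
  Real.sq_sqrt <| sum_nonneg fun i _ => mul_nonneg (hp i).1 (sub_nonneg.2 (hp i).2)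

lemma Real.exp_le_one_add_exp_mul {x K : ℝ} (hx₀ : 0 ≤ x) (hxK : x ≤ K) :
    Real.exp x ≤ 1 + Real.exp K * x := by
  have h : (1 - x) * Real.exp x ≤ Real.exp (-x) * Real.exp x :=
    mul_le_mul_of_nonneg_right (by linarith [Real.add_one_le_exp (-x)]) (Real.exp_pos x).le
  rw [← Real.exp_add, neg_add_cancel, Real.exp_zero] at h
  nlinarith [Real.exp_le_exp.2 hxK]

lemma Real.prod_one_add_le_one_add_exp_mul_sum {ι : Type*} (s : Finset ι) {a : ι → ℝ}
    {K : ℝ} (ha : ∀ i, 0 ≤ a i) (hK : ∑ i ∈ s, a i ≤ K) :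
    ∏ i ∈ s, (1 + a i) ≤ 1 + Real.exp K * ∑ i ∈ s, a i :=
  (Real.prod_one_add_le_exp_sum s ha).trans <|
    Real.exp_le_one_add_exp_mul (sum_nonneg fun i _ => ha i) hK

lemma prod_one_add_sq_exp_sub_one_le {n : ℕ} {p : Fin n → ℝ} (hp : ∀ i, 0 ≤ p i ∧ p i ≤ 1)
    {lam : ℝ} (hl₀ : 0 ≤ lam) (hl₁ : lam ≤ 1) (hls : lam * pbStddev n p ≤ 1) :
    ∏ i, (1 + (Real.exp lam - 1) ^ 2 * (p i * (1 - p i)))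
      ≤ 1 + 4 * Real.exp 4 * (pbStddev n p * lam) ^ 2 := by
  have hexp : (Real.exp lam - 1) ^ 2 ≤ 4 * lam ^ 2 := by
    have := Real.abs_exp_sub_one_le (x := lam) (by rwa [abs_of_nonneg hl₀])
    rw [abs_of_nonneg hl₀] at this
    nlinarith [abs_nonneg (Real.exp lam - 1), sq_abs (Real.exp lam - 1)]
  have hsum : ∑ i, (Real.exp lam - 1) ^ 2 * (p i * (1 - p i)) ≤ 4 * (pbStddev n p * lam) ^ 2 := by
    rw [← mul_sum, mul_pow, pbStddev_sq n p hp]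
    nlinarith [sum_nonneg fun i (_ : i ∈ univ) => mul_nonneg (hp i).1 (sub_nonneg.2 (hp i).2)]
  have hstd : 4 * (pbStddev n p * lam) ^ 2 ≤ 4 := by
    have hσ : 0 ≤ pbStddev n p := Real.sqrt_nonneg _
    rw [mul_comm] at hls
    linarith [pow_le_one₀ (n := 2) (mul_nonneg hσ hl₀) hls]
  calc _ ≤ 1 + Real.exp 4 * ∑ i, (Real.exp lam - 1) ^ 2 * (p i * (1 - p i)) :=
        Real.prod_one_add_le_one_add_exp_mul_sum _
          (fun i => mul_nonneg (sq_nonneg _) (mul_nonneg (hp i).1 (sub_nonneg.2 (hp i).2)))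
          (hsum.trans hstd)
    _ ≤ 1 + Real.exp 4 * (4 * (pbStddev n p * lam) ^ 2) := by gcongr
    _ = 1 + 4 * Real.exp 4 * (pbStddev n p * lam) ^ 2 := by ring

lemma expSurv_nonneg (lam s : ℝ) : 0 ≤ expSurv lam s :=
  le_min zero_le_one (Real.exp_pos _).le

lemma expSurv_le_expSurv_sub_one {lam : ℝ} (hlam : 0 ≤ lam) (s : ℝ) :
    expSurv lam s ≤ expSurv lam (s - 1) :=
  min_le_min le_rfl (Real.exp_le_exp.2 (by nlinarith))

lemma expSurv_sub_one_le {lam : ℝ} (hlam : 0 ≤ lam) (s : ℝ) :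
    expSurv lam (s - 1) ≤ Real.exp lam * expSurv lam s := by
  rw [expSurv, expSurv, mul_min_of_nonneg _ _ (Real.exp_pos lam).le, mul_one, ← Real.exp_add]
  exact min_le_min (Real.one_le_exp hlam) (le_of_eq (by ring_nf))

lemma chiSq_conditional_eq {κ : Type*} (s : Finset κ) (w x : κ → ℝ) (hw : ∑ t ∈ s, w t = 1)
    {β : ℝ} (hβ : ∑ t ∈ s, w t * x t = β) (hβ₁ : β ≠ 1) :
    ∑ t ∈ s, w t * (1 - (w t * (1 - x t) / (1 - β)) / w t) ^ 2
      = (∑ t ∈ s, w t * x t ^ 2 - β ^ 2) / (1 - β) ^ 2 := by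
  have hβ' : 1 - β ≠ 0 := sub_ne_zero.2 hβ₁.symm
  have hterm : ∀ t ∈ s, w t * (1 - (w t * (1 - x t) / (1 - β)) / w t) ^ 2
      = (w t * x t ^ 2 - 2 * β * (w t * x t) + β ^ 2 * w t) / (1 - β) ^ 2 := by
    intro t _
    rcases eq_or_ne (w t) 0 with hwt | hwt
    · simp [hwt]
    · field_simp
      ring
  rw [sum_congr rfl hterm, ← sum_div, sum_add_distrib, sum_sub_distrib, ← mul_sum, ← mul_sum,
    hw, hβ]
  ring

/-- The conditional law of `T` given `¬B` has mass function `t ↦ pb(t) · Pr(X ≤ θn - t) / Pr[¬B]`,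
and `stddev[T] / E[X] = stddev[T] · lam`. -/
theorem gentle_measurement_poisson_binomial :
    ∃ C : ℝ, 0 < C ∧
      ∀ (n : ℕ) (p : Fin n → ℝ) (θ lam : ℝ),
        (∀ i, 0 ≤ p i ∧ p i ≤ 1) →
        0 < lam → lam ≤ 1 → lam * pbStddev n p ≤ 1 →
        prExceed n p lam θ < 1 / 4 →
        (∑ t ∈ Finset.range (n + 1),
            pbPMF n p t *
              (1 - (pbPMF n p t * (1 - expSurv lam (θ * n - t)) /
                      (1 - prExceed n p lam θ)) / pbPMF n p t) ^ 2)
          ≤ C * (prExceed n p lam θ * pbStddev n p * lam) ^ 2 := by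
  refine ⟨8 * Real.exp 4, by positivity, fun n p θ lam hp hl₀ hl₁ hls hβ => ?_⟩
  set β := prExceed n p lam θ
  set f : ℕ → ℝ := fun t => expSurv lam (θ * n - t)
  have hshift (t : ℕ) : θ * n - ((t + 1 : ℕ) : ℝ) = θ * n - t - 1 := by push_cast; ring
  have hmass : ∑ t ∈ range (n + 1), pbPMF n p t = 1 := by
    simpa using (pbExpect_univ_eq_sum_pbPMF n p fun _ => 1).symm.trans (pbExpect_const _ p 1)
  have hmean : pbExpect univ p f = β := pbExpect_univ_eq_sum_pbPMF n p f
  have hβ₀ : 0 ≤ β :=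
    hmean ▸ (pbExpect_const univ p 0).symm.le.trans (pbExpect_mono hp fun _ => expSurv_nonneg _ _)
  have hsecond : ∑ t ∈ range (n + 1), pbPMF n p t * f t ^ 2
      ≤ β ^ 2 * (1 + 4 * Real.exp 4 * (pbStddev n p * lam) ^ 2) := by
    rw [← pbExpect_univ_eq_sum_pbPMF, ← hmean]
    refine (pbExpect_sq_le hp (Real.one_le_exp hl₀.le) univ (fun _ => expSurv_nonneg _ _)
      (fun t => ?_) (fun t => ?_)).trans <|
      mul_le_mul_of_nonneg_left (prod_one_add_sq_exp_sub_one_le hp hl₀.le hl₁ hls) (sq_nonneg _)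
    · simp only [hshift]; exact expSurv_le_expSurv_sub_one hl₀.le _
    · simp only [hshift]; exact expSurv_sub_one_le hl₀.le _
  refine (chiSq_conditional_eq _ _ f hmass (β := β) rfl (by linarith)).trans_le ?_
  rw [div_le_iff₀ (by nlinarith)]
  have h916 : 9 / 16 ≤ (1 - β) ^ 2 := by nlinarith
  have hC : 0 ≤ Real.exp 4 * (β * pbStddev n p * lam) ^ 2 := by positivity
  calc _ ≤ β ^ 2 * (1 + 4 * Real.exp 4 * (pbStddev n p * lam) ^ 2) - β ^ 2 := by linarith
    _ = 4 * (Real.exp 4 * (β * pbStddev n p * lam) ^ 2) := by ring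
    _ ≤ _ := by nlinarith [mul_le_mul_of_nonneg_left h916 hC]
end

section
/- Let T ~ PB(p_1,…,p_n) be a Poisson binomial random variable and let X be an independent exponential random variable with mean 1/λ where 0 < λ ≤ 1. Then for every θ ∈ ℝ, Pr(T + X > θn) ≤ exp(−nλ(θ − p̄ − eλ/2)), where p̄ = (1/n)Σ_{i=1}^n p_i and e is Euler's number. -/
open scoped BigOperators

/-!
Chernoff's method: since `Pr(X > s) ≤ exp(-λ s)`, the probability is at most
`exp(-λθn) · E[exp(λT)]`, and the generating function of `T` factors as
`∏ (1 - pᵢ + pᵢ e^λ)`. For `0 ≤ λ ≤ 1` the Taylor bound `e^λ ≤ 1 + λ + e λ²/2` together with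
`1 + x ≤ eˣ` turns each factor into `exp(pᵢ(λ + eλ²/2))`, and `∑ pᵢ ≤ n` finishes.
-/

open Finset Real

theorem sum_pbPMF_mul_pow (n : ℕ) (p : Fin n → ℝ) (x : ℝ) :
    ∑ t ∈ range (n + 1), pbPMF n p t * x ^ t = ∏ i, (1 - p i + p i * x) := by
  have hexpand := prod_add (fun i => p i * x) (fun i => 1 - p i) (univ : Finset (Fin n))
  rw [powerset_card_biUnion,
    sum_biUnion fun i _ j _ hij => pairwise_disjoint_powersetCard _ hij] at hexpand
  simp only [card_univ, Fintype.card_fin] at hexpand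
  rw [prod_congr rfl fun i _ => add_comm (1 - p i) (p i * x), hexpand]
  refine sum_congr rfl fun t _ => ?_
  rw [pbPMF, sum_mul]
  refine sum_congr rfl fun s hs => ?_
  rw [prod_mul_distrib, prod_const, (mem_powersetCard.mp hs).2, compl_eq_univ_sdiff]
  ring

theorem pbPMF_nonneg (n : ℕ) (p : Fin n → ℝ) (hp : ∀ i, 0 ≤ p i ∧ p i ≤ 1) (t : ℕ) :
    0 ≤ pbPMF n p t :=
  sum_nonneg fun _ _ => mul_nonneg (prod_nonneg fun i _ => (hp i).1)
    (prod_nonneg fun i _ => sub_nonneg.mpr (hp i).2)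

theorem prExceed_le_exp_mul_prod (n : ℕ) (p : Fin n → ℝ) (lam θ : ℝ)
    (hp : ∀ i, 0 ≤ p i ∧ p i ≤ 1) :
    prExceed n p lam θ ≤ exp (-(lam * (θ * n))) * ∏ i, (1 - p i + p i * exp lam) := by
  rw [← sum_pbPMF_mul_pow, mul_sum]
  refine sum_le_sum fun t _ => ?_
  calc pbPMF n p t * expSurv lam (θ * n - t)
      ≤ pbPMF n p t * exp (-(lam * (θ * n - t))) :=
        mul_le_mul_of_nonneg_left (min_le_right _ _) (pbPMF_nonneg n p hp t)
    _ = exp (-(lam * (θ * n))) * (pbPMF n p t * exp lam ^ t) := by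
        rw [← exp_nat_mul, mul_left_comm, ← exp_add]
        ring_nf

theorem exp_le_one_add_add_exp_one_mul_sq_div_two {x : ℝ} (h0 : 0 ≤ x) (h1 : x ≤ 1) :
    exp x ≤ 1 + x + exp 1 * x ^ 2 / 2 := by
  have htaylor := exp_bound' h0 h1 (n := 2) (by norm_num)
  have he : (3 : ℝ) / 2 ≤ exp 1 := by linarith [add_one_le_exp (1 : ℝ)]
  norm_num [sum_range_succ, Nat.factorial] at htaylor
  nlinarith [sq_nonneg x]

theorem one_sub_add_mul_exp_le_exp {q lam : ℝ} (hq : 0 ≤ q) (hlam : 0 ≤ lam) (hlam1 : lam ≤ 1) :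
    1 - q + q * exp lam ≤ exp (q * (lam + exp 1 * lam ^ 2 / 2)) :=
  calc 1 - q + q * exp lam = q * (exp lam - 1) + 1 := by ring
    _ ≤ q * (lam + exp 1 * lam ^ 2 / 2) + 1 := by
        gcongr
        linarith [exp_le_one_add_add_exp_one_mul_sq_div_two hlam hlam1]
    _ ≤ _ := add_one_le_exp _

theorem prod_one_sub_add_mul_exp_le {ι : Type*} (s : Finset ι) (q : ι → ℝ)
    (hq : ∀ i, 0 ≤ q i ∧ q i ≤ 1) {lam : ℝ} (hlam : 0 ≤ lam) (hlam1 : lam ≤ 1) :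
    ∏ i ∈ s, (1 - q i + q i * exp lam) ≤ exp ((∑ i ∈ s, q i) * (lam + exp 1 * lam ^ 2 / 2)) := by
  rw [sum_mul, exp_sum]
  refine prod_le_prod (fun i _ => ?_) fun i _ => one_sub_add_mul_exp_le_exp (hq i).1 hlam hlam1
  have := mul_nonneg (hq i).1 (exp_pos lam).le
  linarith [(hq i).2]

theorem natCast_mul_sum_div_natCast (n : ℕ) (p : Fin n → ℝ) :
    (n : ℝ) * ((∑ i, p i) / n) = ∑ i, p i := by
  rcases n.eq_zero_or_pos with rfl | hn
  · simp
  · field_simp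

theorem prExceed_le_exp_general (n : ℕ) (p : Fin n → ℝ) (lam θ : ℝ)
    (hp : ∀ i, 0 ≤ p i ∧ p i ≤ 1) (hlam : 0 < lam) (hlam1 : lam ≤ 1) :
    prExceed n p lam θ ≤
      Real.exp (-((n : ℝ) * lam * (θ - (∑ i, p i) / n - Real.exp 1 * lam / 2))) := by
  have hsum_le : ∑ i, p i ≤ n := by
    simpa using sum_le_sum fun i (_ : i ∈ univ) => (hp i).2
  calc prExceed n p lam θ
      ≤ exp (-(lam * (θ * n))) * ∏ i, (1 - p i + p i * exp lam) :=
        prExceed_le_exp_mul_prod n p lam θ hp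
    _ ≤ exp (-(lam * (θ * n))) * exp ((∑ i, p i) * (lam + exp 1 * lam ^ 2 / 2)) := by
        gcongr
        exact prod_one_sub_add_mul_exp_le _ p hp hlam.le hlam1
    _ ≤ _ := by
        rw [← exp_add, exp_le_exp]
        nlinarith [natCast_mul_sum_div_natCast n p, mul_pos (exp_pos 1) (mul_pos hlam hlam)]

/-- For `T ~ PB(p₁,…,pₙ)` and `X` an independent exponential random variable with
mean `1/lam`, `0 < lam ≤ 1`, and any `θ ∈ ℝ`:
`Pr(T + X > θn) ≤ exp (-n·lam·(θ - p̄ - e·lam/2))` where `p̄ = (1/n) ∑ pᵢ`. -/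
theorem prExceed_le_exp (n : ℕ) (p : Fin n → ℝ) (lam θ : ℝ)
    (hn : 0 < n) (hp : ∀ i, 0 ≤ p i ∧ p i ≤ 1) (hlam : 0 < lam) (hlam1 : lam ≤ 1) :
    prExceed n p lam θ ≤
      Real.exp (-((n : ℝ) * lam * (θ - (∑ i, p i) / n - Real.exp 1 * lam / 2))) :=
  prExceed_le_exp_general n p lam θ hp hlam hlam1
end

section
/- Let N ≥ n ≥ 1 and let X_1,…,X_n be a uniformly random sample drawn without replacement from {1,…,N}. Let {x_{i,j} : 1 ≤ i ≤ M, 1 ≤ j ≤ N} be M finite populations of N numbers each, with 0 ≤ x_{i,j} ≤ 1 for all i, j, and set μ_i = (1/N)Σ_{j=1}^N x_{i,j}. Then for every ε > 0, Pr( max_{1 ≤ i ≤ M} |Σ_{j=1}^n x_{i,X_j} − nμ_i| ≥ nε ) ≤ 2M e^{−2nε²}. -/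
/-! Hoeffding's bound survives sampling without replacement at the level of the moment generating
function. Draw the first element `v` uniformly and the remaining `n - 1` from the other `N - 1`,
whose mean is `(A - a v) / (N - 1)` with `A = ∑ a`. The induction hypothesis for the remaining
draws leaves `exp (t c a v)` to be averaged over `v`, with `c = 1 - (n - 1) / (N - 1) ∈ [0, 1]`,
and Hoeffding's lemma for this single draw closes the induction with the same bound
`exp (n (t μ + t² (hi - lo)² / 8))` as for independent draws. Markov's inequality at
`t = 4 ε / (hi - lo)²`, applied to `a` and to `-a`, and a union bound over the populations
finish the proof. -/

open scoped BigOperators Classical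

open Real Finset

open ProbabilityTheory MeasureTheory in
theorem sum_exp_mul_le_of_mem_Icc {α : Type*} [Fintype α] [Nonempty α] {a : α → ℝ} {lo hi : ℝ}
    (ha : ∀ v, a v ∈ Set.Icc lo hi) (s : ℝ) :
    ∑ v, exp (s * a v) ≤
      Fintype.card α * exp (s * ((∑ v, a v) / Fintype.card α) + s ^ 2 * (hi - lo) ^ 2 / 8) := by
  let _ : MeasurableSpace α := ⊤
  have hmean (f : α → ℝ) : ∫ v, f v ∂(PMF.uniformOfFintype α).toMeasure =
      (∑ v, f v) / Fintype.card α := by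
    simp [PMF.integral_eq_sum, ← Finset.mul_sum, div_eq_inv_mul]
  have hoeffding := (hasSubgaussianMGF_of_mem_Icc (μ := (PMF.uniformOfFintype α).toMeasure)
    (measurable_of_countable a).aemeasurable (ae_of_all _ ha)).mgf_le s
  simp only [mgf, hmean, mul_sub, exp_sub, ← Finset.sum_div] at hoeffding
  rw [div_div, div_le_iff₀ (by positivity)] at hoeffding
  refine hoeffding.trans_eq ?_
  rw [add_comm, exp_add]
  simp only [NNReal.coe_pow, NNReal.coe_div, coe_nnnorm, Real.norm_eq_abs, div_pow, sq_abs]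
  push_cast
  ring_nf

def Function.Embedding.finSuccEquivSigma (n : ℕ) (α : Type*) :
    (Fin (n + 1) ↪ α) ≃ Σ v : α, (Fin n ↪ {w // w ≠ v}) where
  toFun σ := ⟨σ 0, fun j ↦ ⟨σ j.succ, σ.injective.ne (Fin.succ_ne_zero j)⟩,
    fun _ _ h ↦ Fin.succ_injective _ (σ.injective (congrArg Subtype.val h))⟩
  invFun p := ⟨Fin.cons p.1 (Subtype.val ∘ p.2), Fin.cons_injective_iff.2
    ⟨fun ⟨j, hj⟩ ↦ (p.2 j).2 hj, Subtype.val_injective.comp p.2.injective⟩⟩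
  left_inv σ := by ext j; exact Fin.cases rfl (fun _ ↦ rfl) j
  right_inv _ := rfl

theorem sum_embedding_finSucc {α M : Type*} [Fintype α] [AddCommMonoid M] {n : ℕ}
    (f : (Fin (n + 1) → α) → M) :
    ∑ σ : Fin (n + 1) ↪ α, f σ =
      ∑ v : α, ∑ τ : Fin n ↪ {w // w ≠ v}, f (Fin.cons v (Subtype.val ∘ τ)) := by
  rw [← (Function.Embedding.finSuccEquivSigma n α).symm.sum_comp, Fintype.sum_sigma]
  rfl

theorem sum_exp_add_mul_mean_erase_le {α : Type*} [Fintype α] {a : α → ℝ} {lo hi : ℝ}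
    (ha : ∀ v, a v ∈ Set.Icc lo hi) {n : ℕ} (hn : n + 1 ≤ Fintype.card α) (t : ℝ) :
    ∑ v, exp (t * a v + n * (t * ((∑ w, a w - a v) / (Fintype.card α - 1)))) ≤
      Fintype.card α *
        exp ((n + 1) * (t * ((∑ w, a w) / Fintype.card α)) + t ^ 2 * (hi - lo) ^ 2 / 8) := by
  have : Nonempty α := Fintype.card_pos_iff.1 (by omega)
  rcases n.eq_zero_or_pos with rfl | hn0
  · simpa using sum_exp_mul_le_of_mem_Icc ha t
  set N : ℝ := (Fintype.card α : ℝ)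
  set A := ∑ w, a w
  have hN : (n : ℝ) + 1 ≤ N := by simp only [N]; exact_mod_cast hn
  have hn0' : (1 : ℝ) ≤ n := by exact_mod_cast hn0
  obtain ⟨c, hc⟩ : ∃ c : ℝ, c = 1 - n / (N - 1) := ⟨_, rfl⟩
  have hc0 : 0 ≤ c := by
    rw [hc, sub_nonneg, div_le_one (by linarith)]; linarith
  have hc1 : c ≤ 1 := by
    have : 0 ≤ n / (N - 1) := div_nonneg (by linarith) (by linarith)
    linarith
  have hsplit : ∀ v, t * a v + n * (t * ((A - a v) / (N - 1))) =
      t * c * a v + n * t * A / (N - 1) := fun v ↦ by rw [hc]; ring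
  calc ∑ v, exp (t * a v + n * (t * ((A - a v) / (N - 1))))
      = (∑ v, exp (t * c * a v)) * exp (n * t * A / (N - 1)) := by
        simp only [hsplit, exp_add, Finset.sum_mul]
    _ ≤ N * exp (t * c * (A / N) + (t * c) ^ 2 * (hi - lo) ^ 2 / 8) *
          exp (n * t * A / (N - 1)) := by
        gcongr; exact sum_exp_mul_le_of_mem_Icc ha (t * c)
    _ ≤ N * exp ((n + 1) * (t * (A / N)) + t ^ 2 * (hi - lo) ^ 2 / 8) := by
        rw [mul_assoc, ← exp_add]
        refine mul_le_mul_of_nonneg_left (exp_le_exp.2 ?_) (by positivity)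
        have hmean : t * c * (A / N) + n * t * A / (N - 1) = (n + 1) * (t * (A / N)) := by
          rw [hc]
          field_simp [show N - 1 ≠ 0 by linarith, show N ≠ 0 by linarith]
          ring
        have hc2 : (t * c) ^ 2 ≤ t ^ 2 := by
          rw [mul_pow]; nlinarith [sq_nonneg t, mul_le_mul hc1 hc1 hc0 zero_le_one]
        nlinarith [sq_nonneg (hi - lo)]

theorem sum_exp_sum_embedding_le {α : Type*} [Fintype α] {a : α → ℝ} {lo hi : ℝ}
    (ha : ∀ v, a v ∈ Set.Icc lo hi) {n : ℕ} (hn : n ≤ Fintype.card α) (t : ℝ) :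
    ∑ σ : Fin n ↪ α, exp (t * ∑ j, a (σ j)) ≤
      Fintype.card (Fin n ↪ α) *
        exp (n * (t * ((∑ v, a v) / Fintype.card α) + t ^ 2 * (hi - lo) ^ 2 / 8)) := by
  induction n generalizing α with
  | zero => simp
  | succ n ih =>
    obtain ⟨m, hm⟩ : ∃ m, Fintype.card α = m + 1 := ⟨Fintype.card α - 1, by omega⟩
    have hcard_ne (v : α) : Fintype.card {w // w ≠ v} = m := by
      simp [Fintype.card_subtype_compl, hm]
    have hsum_ne (v : α) : ∑ w : {w // w ≠ v}, a w = ∑ w, a w - a v := by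
      rw [Fintype.sum_eq_add_sum_subtype_ne a v]; ring
    have hrest (v : α) := ih (a := fun w : {w // w ≠ v} ↦ a w) (fun w ↦ ha w)
      (by rw [hcard_ne]; omega)
    simp only [hcard_ne, hsum_ne, Fintype.card_embedding_eq, Fintype.card_fin] at hrest
    have hstep := sum_exp_add_mul_mean_erase_le ha (n := n) (by omega) t
    simp only [hm, Nat.cast_add, Nat.cast_one, add_sub_cancel_right] at hstep
    calc ∑ σ : Fin (n + 1) ↪ α, exp (t * ∑ j, a (σ j))
        = ∑ v, exp (t * a v) * ∑ τ : Fin n ↪ {w // w ≠ v}, exp (t * ∑ j, a (τ j)) := by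
          refine (sum_embedding_finSucc (fun σ ↦ exp (t * ∑ j, a (σ j)))).trans ?_
          simp only [Fin.sum_univ_succ, Fin.cons_zero, Fin.cons_succ, Function.comp_apply,
            mul_add, exp_add, Finset.mul_sum]
      _ ≤ ∑ v, exp (t * a v) * (m.descFactorial n *
            exp (n * (t * ((∑ w, a w - a v) / m) + t ^ 2 * (hi - lo) ^ 2 / 8))) := by
          gcongr with v; exact hrest v
      _ = m.descFactorial n * exp (n * (t ^ 2 * (hi - lo) ^ 2 / 8)) *
            ∑ v, exp (t * a v + n * (t * ((∑ w, a w - a v) / m))) := by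
          rw [Finset.mul_sum]; congr 1 with v
          rw [mul_add, exp_add, exp_add]; ring
      _ ≤ m.descFactorial n * exp (n * (t ^ 2 * (hi - lo) ^ 2 / 8)) *
            ((m + 1) * exp ((n + 1) * (t * ((∑ w, a w) / (m + 1))) + t ^ 2 * (hi - lo) ^ 2 / 8)) := by
          gcongr
      _ = _ := by
          rw [Fintype.card_embedding_eq, Fintype.card_fin, hm, Nat.succ_descFactorial_succ]
          push_cast
          rw [mul_mul_mul_comm, ← exp_add, mul_comm (m.descFactorial n : ℝ)]
          congr 2
          ring

theorem card_filter_le_mul_exp_le_sum_exp {ι : Type*} (s : Finset ι) (f : ι → ℝ) (c : ℝ)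
    {t : ℝ} (ht : 0 ≤ t) :
    (#{i ∈ s | c ≤ f i} : ℝ) * exp (t * c) ≤ ∑ i ∈ s, exp (t * f i) := by
  rw [← nsmul_eq_mul]
  calc #{i ∈ s | c ≤ f i} • exp (t * c) ≤ ∑ i ∈ s with c ≤ f i, exp (t * f i) :=
        card_nsmul_le_sum _ _ _ fun i hi ↦ by gcongr; exact (mem_filter.1 hi).2
    _ ≤ ∑ i ∈ s, exp (t * f i) :=
        sum_le_sum_of_subset_of_nonneg (filter_subset _ _) fun _ _ _ ↦ (exp_pos _).le

theorem card_embedding_sum_sub_ge_le {α : Type*} [Fintype α] {a : α → ℝ} {lo hi : ℝ}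
    (ha : ∀ v, a v ∈ Set.Icc lo hi) {n : ℕ} (hn : n ≤ Fintype.card α) {ε : ℝ} (hε : 0 ≤ ε) :
    (#{σ : Fin n ↪ α | n * ε ≤ ∑ j, a (σ j) - n * ((∑ v, a v) / Fintype.card α)} : ℝ) ≤
      Fintype.card (Fin n ↪ α) * exp (-2 * n * ε ^ 2 / (hi - lo) ^ 2) := by
  set μ := (∑ v, a v) / Fintype.card α
  set d := (hi - lo) ^ 2
  -- the Chernoff bound `exp (n t² d / 8 - t n ε)` is optimised at `t = 4 ε / d`
  set t := 4 * ε / d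
  have ht : 0 ≤ t := by positivity
  have hmarkov := card_filter_le_mul_exp_le_sum_exp univ
    (fun σ : Fin n ↪ α ↦ ∑ j, a (σ j) - n * μ) (n * ε) ht
  have hmgf := sum_exp_sum_embedding_le ha hn t
  have hcentre : ∑ σ : Fin n ↪ α, exp (t * (∑ j, a (σ j) - n * μ)) =
      exp (-(t * (n * μ))) * ∑ σ : Fin n ↪ α, exp (t * ∑ j, a (σ j)) := by
    rw [Finset.mul_sum]
    congr 1 with σ
    rw [← exp_add]
    ring_nf
  have hexponent : n * (t * μ + t ^ 2 * d / 8) - t * (n * μ) - t * (n * ε) =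
      -2 * n * ε ^ 2 / d := by
    rcases eq_or_ne d 0 with hd | hd
    · simp [t, hd]
    · simp only [t]; field_simp; ring
  have hchernoff : (#{σ : Fin n ↪ α | n * ε ≤ ∑ j, a (σ j) - n * μ} : ℝ) * exp (t * (n * ε)) ≤
      Fintype.card (Fin n ↪ α) * exp (n * (t * μ + t ^ 2 * d / 8) - t * (n * μ)) :=
    calc _ ≤ _ := hmarkov
      _ = exp (-(t * (n * μ))) * ∑ σ : Fin n ↪ α, exp (t * ∑ j, a (σ j)) := hcentre
      _ ≤ exp (-(t * (n * μ))) *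
            (Fintype.card (Fin n ↪ α) * exp (n * (t * μ + t ^ 2 * d / 8))) := by
        gcongr
      _ = _ := by rw [sub_eq_add_neg, exp_add]; ring
  rw [← hexponent, exp_sub, ← mul_div_assoc (Fintype.card (Fin n ↪ α) : ℝ),
    le_div_iff₀ (exp_pos _)]
  exact hchernoff

theorem card_embedding_abs_sum_sub_ge_le {α : Type*} [Fintype α] {a : α → ℝ} {lo hi : ℝ}
    (ha : ∀ v, a v ∈ Set.Icc lo hi) {n : ℕ} (hn : n ≤ Fintype.card α) {ε : ℝ} (hε : 0 ≤ ε) :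
    (#{σ : Fin n ↪ α | n * ε ≤ |∑ j, a (σ j) - n * ((∑ v, a v) / Fintype.card α)|} : ℝ) ≤
      2 * Fintype.card (Fin n ↪ α) * exp (-2 * n * ε ^ 2 / (hi - lo) ^ 2) := by
  have hneg : ∀ v, -a v ∈ Set.Icc (-hi) (-lo) := fun v ↦ ⟨neg_le_neg (ha v).2, neg_le_neg (ha v).1⟩
  have hupper := card_embedding_sum_sub_ge_le ha hn hε
  have hlower := card_embedding_sum_sub_ge_le hneg hn hε
  rw [show -lo - -hi = hi - lo by ring] at hlower
  simp only [Finset.sum_neg_distrib, neg_div, mul_neg, sub_neg_eq_add] at hlower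
  calc (#{σ : Fin n ↪ α | n * ε ≤ |∑ j, a (σ j) - n * ((∑ v, a v) / Fintype.card α)|} : ℝ)
      ≤ #{σ : Fin n ↪ α | n * ε ≤ ∑ j, a (σ j) - n * ((∑ v, a v) / Fintype.card α)} +
        #{σ : Fin n ↪ α | n * ε ≤ -∑ j, a (σ j) + n * ((∑ v, a v) / Fintype.card α)} := by
        norm_cast
        refine (card_le_card fun σ hσ ↦ ?_).trans (card_union_le _ _)
        simp only [mem_filter, mem_univ, true_and, mem_union] at hσ ⊢
        rcases le_abs'.1 hσ with h | h
        · right; linarith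
        · left; exact h
    _ ≤ _ := by linarith

theorem sampling_without_replacement_hoeffding_general
    (N n M : ℕ) (hN : n ≤ N)
    (x : Fin M → Fin N → ℝ) (hx : ∀ i j, 0 ≤ x i j ∧ x i j ≤ 1)
    (ε : ℝ) (hε : 0 < ε) :
    ((Finset.univ.filter (fun σ : Fin n ↪ Fin N =>
          ∃ i : Fin M,
            (n : ℝ) * ε ≤ |(∑ j, x i (σ j)) - n * ((∑ j, x i j) / N)|)).card : ℝ)
        / (Fintype.card (Fin n ↪ Fin N)) ≤
      2 * M * Real.exp (-2 * n * ε ^ 2) := by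
  have hK : (0 : ℝ) < Fintype.card (Fin n ↪ Fin N) := by
    exact_mod_cast Fintype.card_pos_iff.2
      (Function.Embedding.nonempty_of_card_le (by simpa using hN))
  have hpop (i : Fin M) := card_embedding_abs_sum_sub_ge_le (a := x i) (lo := 0) (hi := 1)
    (fun j ↦ hx i j) (by simpa using hN) hε.le
  simp only [Fintype.card_fin, sub_zero, one_pow, div_one] at hpop
  rw [div_le_iff₀ hK]
  calc ((Finset.univ.filter (fun σ : Fin n ↪ Fin N =>
          ∃ i : Fin M, (n : ℝ) * ε ≤ |(∑ j, x i (σ j)) - n * ((∑ j, x i j) / N)|)).card : ℝ)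
      ≤ ∑ i : Fin M, (#{σ : Fin n ↪ Fin N |
          (n : ℝ) * ε ≤ |(∑ j, x i (σ j)) - n * ((∑ j, x i j) / N)|} : ℝ) := by
        norm_cast
        refine (card_le_card fun σ hσ ↦ ?_).trans card_biUnion_le
        simpa using hσ
    _ ≤ ∑ _i : Fin M, 2 * Fintype.card (Fin n ↪ Fin N) * Real.exp (-2 * n * ε ^ 2) :=
        sum_le_sum fun i _ ↦ hpop i
    _ = 2 * M * Real.exp (-2 * n * ε ^ 2) * Fintype.card (Fin n ↪ Fin N) := by
        simp only [sum_const, card_univ, Fintype.card_fin, nsmul_eq_mul]; ring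

/-- **Hoeffding bound for sampling without replacement, simultaneously for `M`
populations.**  Let `X₁,…,Xₙ` be a uniformly random injective tuple of indices
drawn from `{1,…,N}` (`N ≥ n ≥ 1`), i.e. a uniformly random embedding
`σ : Fin n ↪ Fin N`.  Given `M` populations `x i : Fin N → [0,1]` with means
`μᵢ = (1/N) ∑ⱼ x i j`, the probability that some population's sample sum deviates
from `n·μᵢ` by at least `n·ε` is at most `2·M·exp(-2nε²)`. -/
theorem sampling_without_replacement_hoeffding
    (N n M : ℕ) (hn : 1 ≤ n) (hN : n ≤ N)
    (x : Fin M → Fin N → ℝ) (hx : ∀ i j, 0 ≤ x i j ∧ x i j ≤ 1)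
    (ε : ℝ) (hε : 0 < ε) :
    ((Finset.univ.filter (fun σ : Fin n ↪ Fin N =>
          ∃ i : Fin M,
            (n : ℝ) * ε ≤ |(∑ j, x i (σ j)) - n * ((∑ j, x i j) / N)|)).card : ℝ)
        / (Fintype.card (Fin n ↪ Fin N)) ≤
      2 * M * Real.exp (-2 * n * ε ^ 2) :=
  sampling_without_replacement_hoeffding_general N n M hN x hx ε hε
end

section
/- Let A and B be Hermitian d×d matrices with ‖A − B‖ ≤ ε for some ε > 0, let θ ∈ ℝ, and suppose A has no eigenvalues in the open interval (θ − 2ε, θ + 2ε). Let E be the orthogonal projection onto the span of the eigenspaces of A with eigenvalues at most θ − ε, and let F be the orthogonal projection onto the span of the eigenspaces of B with eigenvalues at most θ − ε. Then ‖E − F‖ ≤ (π/(4ε))·‖A − B‖, where ‖·‖ is the operator norm. -/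
open scoped BigOperators ComplexOrder Matrix Classical
open Matrix

/-- Operator (spectral) norm of a matrix. -/
noncomputable def opNorm {m : Type*} [Fintype m] [DecidableEq m]
    (M : Matrix m m ℂ) : ℝ :=
  ‖Matrix.toEuclideanCLM (𝕜 := ℂ) M‖

/-- For a Hermitian matrix `A`, the orthogonal projection onto the span of the
eigenspaces of `A` with eigenvalues at most `c` (junk value `0` if `A` is not
Hermitian). -/
noncomputable def spectralProjLE {d : ℕ} (A : Matrix (Fin d) (Fin d) ℂ) (c : ℝ) :
    Matrix (Fin d) (Fin d) ℂ :=
  if hA : A.IsHermitian then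
    (hA.eigenvectorUnitary : Matrix (Fin d) (Fin d) ℂ) *
      Matrix.diagonal (fun i => if hA.eigenvalues i ≤ c then (1 : ℂ) else 0) *
      (star hA.eigenvectorUnitary : Matrix (Fin d) (Fin d) ℂ)
  else 0

/-!
Weyl's perturbation bound: if `‖A - B‖ ≤ ε`, every point of the spectrum of `B` lies within `ε`
of the spectrum of `A`, so `B` has no eigenvalues in `(θ - ε, θ + ε)`.

With `E`, `F` the spectral projections of `A`, `B` at `θ - ε`, the operator `X = (1 - E) F`
solves the Sylvester equation `A X - X (B F) = (1 - E)(A - B) F`. On the range of `1 - E` the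
spectrum of `A` is `≥ θ + 2ε`, while on the range of `F` the spectrum of `B` is `≤ θ - ε`.
Choosing `c` so that `‖(B - c) F‖ ≤ ρ`, the operator `A - c` has an inverse of norm
`≤ 1 / (ρ + 3ε)` on the range of `1 - E`, and the equation for `A - c`, `B - c` then gives
`3ε ‖(1 - E) F‖ ≤ ‖A - B‖`. Swapping the roles of `A` and `B` (the gap now
lies between `θ - 2ε` and `θ + ε`) gives the same bound for `‖(1 - F) E‖ = ‖E (1 - F)‖`.
For orthogonal projections `‖E - F‖ ≤ max ‖E (1 - F)‖ ‖(1 - E) F‖`, and `1/3 < π/4`.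
-/

theorem mul_norm_one_sub_mul_le_of_resolvent {R : Type*} [NormedRing R] {a b p q r : R}
    {ρ δ : ℝ} (hp : IsIdempotentElem p) (hq : IsIdempotentElem q) (hap : Commute a p)
    (hbq : Commute b q) (hr : r * a = 1 - p) (hρ : 0 ≤ ρ) (hδ : 0 < δ)
    (hrn : ‖r‖ ≤ (ρ + δ)⁻¹) (hbn : ‖b * q‖ ≤ ρ) :
    δ * ‖(1 - p) * q‖ ≤ ‖(1 - p) * (a - b) * q‖ := by
  set X := (1 - p) * q
  set C := (1 - p) * (a - b) * q
  have hsylvester : a * X = C + X * (b * q) := by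
    have hXbq : X * (b * q) = (1 - p) * b * q := by
      rw [mul_assoc (1 - p), ← mul_assoc q, ← hbq.eq, mul_assoc, hq.eq, mul_assoc]
    rw [hXbq, ← mul_assoc, ((Commute.one_right a).sub_right hap).eq]
    simp only [C]
    noncomm_ring
  have hX : X = r * (C + X * (b * q)) := by
    rw [← hsylvester, ← mul_assoc, hr, ← mul_assoc, hp.one_sub.eq]
  have hXn : ‖X‖ ≤ (ρ + δ)⁻¹ * (‖C‖ + ‖X‖ * ρ) := calc
    ‖X‖ = ‖r * (C + X * (b * q))‖ := congrArg norm hX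
    _ ≤ ‖r‖ * (‖C‖ + ‖X‖ * ‖b * q‖) := by
      refine (norm_mul_le _ _).trans (mul_le_mul_of_nonneg_left ?_ (norm_nonneg _))
      exact (norm_add_le _ _).trans (add_le_add_right (norm_mul_le _ _) _)
    _ ≤ (ρ + δ)⁻¹ * (‖C‖ + ‖X‖ * ρ) := by gcongr
  rw [inv_mul_eq_div, le_div_iff₀ (by positivity)] at hXn
  linarith

section CStarAlgebra

variable {A : Type*} [CStarAlgebra A]

theorem IsStarProjection.norm_mul_mul_le {p q : A} (hp : IsStarProjection p)
    (hq : IsStarProjection q) (x : A) : ‖p * x * q‖ ≤ ‖x‖ := calc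
  ‖p * x * q‖ ≤ ‖p‖ * ‖x‖ * ‖q‖ := norm_mul₃_le
  _ ≤ 1 * ‖x‖ * 1 := by
    gcongr; exacts [IsStarProjection.norm_le p hp, IsStarProjection.norm_le q hq]
  _ = ‖x‖ := by ring

theorem IsStarProjection.star_mul_self_le_norm_sq_smul [PartialOrder A] [StarOrderedRing A]
    {e z : A} (he : IsStarProjection e) (hz : z * e = z) : star z * z ≤ ‖z‖ ^ 2 • e := by
  have hze : star z * z = e * (star z * z) * e := by
    nth_rewrite 1 [← hz]
    rw [star_mul, he.isSelfAdjoint.star_eq, mul_assoc, mul_assoc, mul_assoc, hz]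
  calc star z * z = e * (star z * z) * e := hze
    _ ≤ e * algebraMap ℝ A (‖z‖ ^ 2) * e :=
      he.isSelfAdjoint.conjugate_le_conjugate CStarAlgebra.star_mul_le_algebraMap_norm_sq
    _ = ‖z‖ ^ 2 • e := by
      rw [Algebra.algebraMap_eq_smul_one, mul_smul_comm, mul_one, smul_mul_assoc,
        he.isIdempotentElem.eq]

theorem IsStarProjection.norm_sub_le_max {p q : A} (hp : IsStarProjection p)
    (hq : IsStarProjection q) : ‖p - q‖ ≤ max ‖p * (1 - q)‖ ‖(1 - p) * q‖ := by
  let := CStarAlgebra.spectralOrder A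
  let := CStarAlgebra.spectralOrderedRing A
  set x := p * (1 - q) with hx_def
  set y := (1 - p) * q with hy_def
  set m := max ‖x‖ ‖y‖
  have hpq : p - q = x - y := by rw [hx_def, hy_def]; noncomm_ring
  have hxy : star x * y = 0 := by
    rw [star_mul, hp.isSelfAdjoint.star_eq, mul_assoc, ← mul_assoc p, hp.mul_one_sub_self,
      zero_mul, mul_zero]
  have hyx : star y * x = 0 := by
    rw [star_mul, hp.one_sub.isSelfAdjoint.star_eq, mul_assoc, ← mul_assoc (1 - p),
      hp.one_sub_mul_self, zero_mul, mul_zero]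
  have hx : star x * x ≤ m ^ 2 • (1 - q) := by
    refine (hq.one_sub.star_mul_self_le_norm_sq_smul ?_).trans ?_
    · rw [mul_assoc, hq.one_sub.isIdempotentElem.eq]
    · gcongr
      · exact hq.one_sub_nonneg
      · exact le_max_left _ _
  have hy : star y * y ≤ m ^ 2 • q := by
    refine (hq.star_mul_self_le_norm_sq_smul ?_).trans ?_
    · rw [mul_assoc, hq.isIdempotentElem.eq]
    · gcongr
      · exact hq.nonneg
      · exact le_max_right _ _
  have hle : star (p - q) * (p - q) ≤ algebraMap ℝ A (m ^ 2) := by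
    rw [hpq, star_sub, sub_mul, mul_sub, mul_sub, hxy, hyx, sub_zero, zero_sub, sub_neg_eq_add,
      Algebra.algebraMap_eq_smul_one, ← sub_add_cancel (1 : A) q, smul_add]
    exact add_le_add hx hy
  rw [← CStarAlgebra.norm_le_iff_le_algebraMap _ (sq_nonneg m) (star_mul_self_nonneg _),
    CStarRing.norm_star_mul_self, ← sq] at hle
  exact (pow_le_pow_iff_left₀ (norm_nonneg _) ((norm_nonneg _).trans (le_max_left _ _))
    two_ne_zero).mp hle

theorem IsSelfAdjoint.notMem_spectrum_of_norm_sub_lt {a b : A} (ha : IsSelfAdjoint a)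
    {β δ : ℝ} (hab : ‖a - b‖ < δ) (hβ : ∀ α ∈ spectrum ℝ a, δ ≤ |α - β|) :
    β ∉ spectrum ℝ b := by
  have hδ : 0 < δ := (norm_nonneg _).trans_lt hab
  have hne : ∀ α ∈ spectrum ℝ a, β - α ≠ 0 := fun α hα h => by
    have := hβ α hα
    rw [abs_sub_comm, h, abs_zero] at this
    linarith
  set r := cfc (fun x : ℝ => (β - x)⁻¹) a
  have hr : r * (algebraMap ℝ A β - a) = 1 := by
    have hlin : algebraMap ℝ A β - a = cfc (fun x : ℝ => β - x) a := by
      rw [cfc_sub (fun _ => β) (fun x => x) a, cfc_const β a, cfc_id' ℝ a]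
    rw [hlin, ← cfc_mul (fun x : ℝ => (β - x)⁻¹) (fun x => β - x) a
        ((continuousOn_const.sub continuousOn_id).inv₀ hne), ← cfc_const_one ℝ a]
    exact cfc_congr fun α hα => inv_mul_cancel₀ (hne α hα)
  have hrn : ‖r‖ ≤ δ⁻¹ := norm_cfc_le (by positivity) fun α hα => by
    rw [norm_inv, Real.norm_eq_abs, abs_sub_comm]
    exact inv_anti₀ hδ (hβ α hα)
  have hsmall : ‖(b - a) * r‖ < 1 := calc
    ‖(b - a) * r‖ ≤ ‖a - b‖ * δ⁻¹ := by
      rw [norm_sub_rev]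
      exact (norm_mul_le _ _).trans (by gcongr)
    _ < δ * δ⁻¹ := by gcongr
    _ = 1 := mul_inv_cancel₀ hδ.ne'
  have hfactor : algebraMap ℝ A β - b = (1 - (b - a) * r) * (algebraMap ℝ A β - a) := by
    rw [sub_mul, one_mul, mul_assoc, hr, mul_one]
    abel
  rw [spectrum.notMem_iff, hfactor]
  exact (isUnit_one_sub_of_norm_lt_one hsmall).mul
    (spectrum.notMem_iff.mp fun hβa => hne β hβa (sub_self β))

theorem IsSelfAdjoint.cfc_sub_const {a : A} (ha : IsSelfAdjoint a) (c : ℝ) :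
    cfc (fun x : ℝ => x - c) a = a - algebraMap ℝ A c := by
  rw [cfc_sub (fun x => x) (fun _ => c) a, cfc_id' ℝ a, cfc_const c a]

/-- `cfc` returns `0` when the indicator of `Set.Iic c` is not continuous on the spectrum of `a`,
so the lemmas below assume the spectrum to be finite. -/
noncomputable def spectralProjIic (a : A) (c : ℝ) : A :=
  cfc (fun x : ℝ => if x ≤ c then (1 : ℝ) else 0) a

theorem commute_spectralProjIic {a : A} (ha : IsSelfAdjoint a) (c : ℝ) :
    Commute a (spectralProjIic a c) := by
  rw [spectralProjIic]
  nth_rewrite 1 [← cfc_id' ℝ a]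
  exact cfc_commute_cfc _ _ a

section FiniteSpectrum

variable {a : A} (ha : IsSelfAdjoint a) (hfin : (spectrum ℝ a).Finite) (c : ℝ)
include hfin

theorem isStarProjection_spectralProjIic : IsStarProjection (spectralProjIic a c) where
  isIdempotentElem := by
    rw [IsIdempotentElem, spectralProjIic,
      ← cfc_mul _ _ a (hfin.continuousOn _) (hfin.continuousOn _)]
    exact cfc_congr fun x _ => by split_ifs <;> norm_num
  isSelfAdjoint := cfc_predicate _ a

include ha

theorem exists_mul_sub_algebraMap_eq_one_sub_spectralProjIic {c' t : ℝ} (hc't : c' < t)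
    (hat : ∀ α ∈ spectrum ℝ a, c < α → t ≤ α) :
    ∃ r : A, r * (a - algebraMap ℝ A c') = 1 - spectralProjIic a c ∧ ‖r‖ ≤ (t - c')⁻¹ := by
  refine ⟨cfc (fun x : ℝ => if x ≤ c then 0 else (x - c')⁻¹) a, ?_, ?_⟩
  · rw [← ha.cfc_sub_const, spectralProjIic, ← cfc_one ℝ a,
      ← cfc_sub _ _ a (hfin.continuousOn _) (hfin.continuousOn _),
      ← cfc_mul _ _ a (hfin.continuousOn _) (hfin.continuousOn _)]
    refine cfc_congr fun α hα => ?_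
    split_ifs with h
    · simp
    · have := hat α hα (not_le.mp h)
      simp [inv_mul_cancel₀ (sub_ne_zero.mpr (by linarith : α ≠ c'))]
  · refine norm_cfc_le (by simp; linarith) fun α hα => ?_
    split_ifs with h
    · simp; linarith
    · have := hat α hα (not_le.mp h)
      rw [norm_inv, Real.norm_of_nonneg (by linarith)]
      exact inv_anti₀ (by linarith) (by linarith)

theorem norm_sub_algebraMap_mul_spectralProjIic_le {c' ρ : ℝ} (hρ : 0 ≤ ρ)
    (hρc : ∀ β ∈ spectrum ℝ a, β ≤ c → |β - c'| ≤ ρ) :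
    ‖(a - algebraMap ℝ A c') * spectralProjIic a c‖ ≤ ρ := by
  rw [← ha.cfc_sub_const, spectralProjIic,
    ← cfc_mul _ _ a (hfin.continuousOn _) (hfin.continuousOn _)]
  refine norm_cfc_le hρ fun β hβ => ?_
  split_ifs with h
  · simpa using hρc β hβ h
  · simpa using hρ

end FiniteSpectrum

theorem mul_norm_one_sub_spectralProjIic_mul_le {a b : A} (ha : IsSelfAdjoint a)
    (hb : IsSelfAdjoint b) (ha' : (spectrum ℝ a).Finite) (hb' : (spectrum ℝ b).Finite)
    {c s t : ℝ} (hst : s < t) (hat : ∀ α ∈ spectrum ℝ a, c < α → t ≤ α)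
    (hbs : ∀ β ∈ spectrum ℝ b, β ≤ c → β ≤ s) :
    (t - s) * ‖(1 - spectralProjIic a c) * spectralProjIic b c‖ ≤ ‖a - b‖ := by
  obtain ⟨L, hL⟩ := hb'.bddBelow
  -- centre `s - ρ` of an interval of radius `ρ` containing the spectrum of `b` below `c`
  set ρ := max (s - L) 0
  obtain ⟨r, hr, hrn⟩ := exists_mul_sub_algebraMap_eq_one_sub_spectralProjIic ha ha' c
    (c' := s - ρ) (by linarith [le_max_right (s - L) 0]) hat
  have hbρ : ‖(b - algebraMap ℝ A (s - ρ)) * spectralProjIic b c‖ ≤ ρ :=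
    norm_sub_algebraMap_mul_spectralProjIic_le hb hb' c (le_max_right _ _) fun β hβ hβc => by
      have := hL hβ
      have := hbs β hβ hβc
      rw [abs_le]
      constructor <;> linarith [le_max_left (s - L) 0, le_max_right (s - L) 0]
  have hp := isStarProjection_spectralProjIic ha' c
  have hq := isStarProjection_spectralProjIic hb' c
  have key := mul_norm_one_sub_mul_le_of_resolvent hp.isIdempotentElem hq.isIdempotentElem
    ((commute_spectralProjIic ha c).sub_left (Algebra.commute_algebraMap_left _ _))
    ((commute_spectralProjIic hb c).sub_left (Algebra.commute_algebraMap_left _ _))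
    hr (le_max_right _ _) (sub_pos.mpr hst) (by convert hrn using 2; ring) hbρ
  rw [sub_sub_sub_cancel_right] at key
  exact key.trans (hp.one_sub.norm_mul_mul_le hq _)

theorem mul_norm_spectralProjIic_sub_le {a b : A} (ha : IsSelfAdjoint a) (hb : IsSelfAdjoint b)
    (ha' : (spectrum ℝ a).Finite) (hb' : (spectrum ℝ b).Finite) {θ ε : ℝ} (hε : 0 < ε)
    (hab : ‖a - b‖ ≤ ε) (hgap : ∀ α ∈ spectrum ℝ a, α ∉ Set.Ioo (θ - 2 * ε) (θ + 2 * ε)) :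
    3 * ε * ‖spectralProjIic a (θ - ε) - spectralProjIic b (θ - ε)‖ ≤ ‖a - b‖ := by
  have hgap' : ∀ α ∈ spectrum ℝ a, α ≤ θ - 2 * ε ∨ θ + 2 * ε ≤ α := fun α hα => by
    by_contra! h
    exact hgap α hα ⟨h.1, h.2⟩
  have hweyl : ∀ β ∈ spectrum ℝ b, β ≤ θ - ε ∨ θ + ε ≤ β := fun β hβ => by
    by_contra! h
    refine ha.notMem_spectrum_of_norm_sub_lt (δ := min (β - (θ - 2 * ε)) (θ + 2 * ε - β))
      (lt_min (by linarith) (by linarith)) (fun α hα => ?_) hβ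
    rcases hgap' α hα with hα' | hα'
    · exact (min_le_left _ _).trans (by rw [abs_sub_comm]; exact le_abs.mpr (Or.inl (by linarith)))
    · exact (min_le_right _ _).trans (le_abs.mpr (Or.inl (by linarith)))
  set p := spectralProjIic a (θ - ε)
  set q := spectralProjIic b (θ - ε)
  have hp := isStarProjection_spectralProjIic ha' (θ - ε)
  have hq := isStarProjection_spectralProjIic hb' (θ - ε)
  have h₁ : 3 * ε * ‖(1 - p) * q‖ ≤ ‖a - b‖ := by
    have := mul_norm_one_sub_spectralProjIic_mul_le ha hb ha' hb' (c := θ - ε) (s := θ - ε)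
      (t := θ + 2 * ε) (by linarith) (fun α hα hlt => (hgap' α hα).resolve_left (by linarith))
      (fun β _ h => h)
    rwa [show θ + 2 * ε - (θ - ε) = 3 * ε by ring] at this
  have h₂ : 3 * ε * ‖p * (1 - q)‖ ≤ ‖a - b‖ := by
    have := mul_norm_one_sub_spectralProjIic_mul_le hb ha hb' ha' (c := θ - ε) (s := θ - 2 * ε)
      (t := θ + ε) (by linarith) (fun β hβ hlt => (hweyl β hβ).resolve_left (by linarith))
      (fun α hα h => (hgap' α hα).resolve_right (by linarith))
    rwa [show θ + ε - (θ - 2 * ε) = 3 * ε by ring, norm_sub_rev b, ← norm_star,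
      star_mul, hp.isSelfAdjoint.star_eq, star_sub, star_one, hq.isSelfAdjoint.star_eq] at this
  calc 3 * ε * ‖p - q‖ ≤ 3 * ε * max ‖p * (1 - q)‖ ‖(1 - p) * q‖ := by
        gcongr; exact hp.norm_sub_le_max hq
    _ ≤ ‖a - b‖ := by rw [mul_max_of_nonneg _ _ (by positivity)]; exact max_le h₂ h₁

end CStarAlgebra

open scoped Matrix.Norms.L2Operator

theorem Matrix.IsHermitian.spectralProjLE_eq {d : ℕ} {A : Matrix (Fin d) (Fin d) ℂ}
    (hA : A.IsHermitian) (c : ℝ) : spectralProjLE A c = spectralProjIic A c := by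
  rw [spectralProjLE, dif_pos hA, spectralProjIic, hA.cfc_eq, IsHermitian.cfc,
    Unitary.conjStarAlgAut_apply]
  congr
  funext i
  simp [apply_ite]

/-- **Perturbation of spectral projections.**  Let `A`, `B` be Hermitian with
`‖A - B‖ ≤ ε`, `ε > 0`, and suppose `A` has no eigenvalues in `(θ - 2ε, θ + 2ε)`.
Let `E` (resp. `F`) be the orthogonal projection onto the span of the eigenspaces
of `A` (resp. `B`) with eigenvalues at most `θ - ε`.  Then
`‖E - F‖ ≤ (π/(4ε))·‖A - B‖`. -/
theorem spectralProj_perturbation (d : ℕ) (A B : Matrix (Fin d) (Fin d) ℂ)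
    (hA : A.IsHermitian) (hB : B.IsHermitian) (θ ε : ℝ) (hε : 0 < ε)
    (hAB : opNorm (A - B) ≤ ε)
    (hgap : ∀ i, hA.eigenvalues i ∉ Set.Ioo (θ - 2 * ε) (θ + 2 * ε)) :
    opNorm (spectralProjLE A (θ - ε) - spectralProjLE B (θ - ε))
      ≤ (Real.pi / (4 * ε)) * opNorm (A - B) := by
  change ‖spectralProjLE A (θ - ε) - spectralProjLE B (θ - ε)‖ ≤ Real.pi / (4 * ε) * ‖A - B‖
  have hgap' : ∀ α ∈ spectrum ℝ A, α ∉ Set.Ioo (θ - 2 * ε) (θ + 2 * ε) := by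
    rw [hA.spectrum_real_eq_range_eigenvalues]
    rintro - ⟨i, rfl⟩
    exact hgap i
  have key := mul_norm_spectralProjIic_sub_le hA.isSelfAdjoint hB.isSelfAdjoint
    A.finite_real_spectrum B.finite_real_spectrum hε hAB hgap'
  rw [← hA.spectralProjLE_eq, ← hB.spectralProjLE_eq] at key
  have hπ : 1 / (3 * ε) ≤ Real.pi / (4 * ε) := by
    rw [div_le_div_iff₀ (by positivity) (by positivity)]
    nlinarith [Real.pi_gt_three]
  calc _ ≤ 1 / (3 * ε) * ‖A - B‖ := by
        rw [one_div_mul_eq_div, le_div_iff₀ (by positivity)]; linarith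
    _ ≤ Real.pi / (4 * ε) * ‖A - B‖ := by gcongr
end
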